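/- Let H be a Hopf algebra over a field k with a nonzero left integral ∫: H → k (i.e., a₁∫(a₂) = ∫(a)1 for all a ∈ H). Then for all g, h ∈ H the identity h₁∫(h₂S(g)) = ∫(hS(g₁))g₂ holds, where S is the antipode. -/

import Mathlib

open TensorProduct LinearMap

noncomputable section

variable (k : Type*) [Field k] (H : Type*) [Ring H] [HopfAlgebra k H]

/-- `∫` is a left integral on `H`: `a₁ ∫(a₂) = ∫(a) 1` for all `a`. -/
def IsLeftIntegral (I : H →ₗ[k] k) : Prop :=
  ∀ a : H, TensorProduct.rid k H (LinearMap.lTensor H I (Coalgebra.comul a)) = I a • (1 : H)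

/-- `∫` is a right integral on `H`: `∫(a₁) a₂ = ∫(a) 1` for all `a`. -/
def IsRightIntegral (I : H →ₗ[k] k) : Prop :=
  ∀ a : H, TensorProduct.lid k H (LinearMap.rTensor H I (Coalgebra.comul a)) = I a • (1 : H)

/-- The linear map `h ⊗ g ↦ ∫(h S(g))`. -/
def intPair (I : H →ₗ[k] k) : H ⊗[k] H →ₗ[k] k :=
  I ∘ₗ LinearMap.mul' k H ∘ₗ LinearMap.lTensor H (HopfAlgebra.antipode (R := k))

/-- The linear map `g ⊗ h ↦ h₁ ∫(h₂ S(g))` (the convolution product). -/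
def convMap (I : H →ₗ[k] k) : H ⊗[k] H →ₗ[k] H :=
  (TensorProduct.rid k H).toLinearMap
    ∘ₗ LinearMap.lTensor H (intPair k H I)
    ∘ₗ (TensorProduct.assoc k H H H).toLinearMap
    ∘ₗ (Coalgebra.comul (R := k)).rTensor H
    ∘ₗ (TensorProduct.comm k H H).toLinearMap

/-- The convolution product `g * h := h₁ ∫(h₂ S(g))`. -/
def convProd (I : H →ₗ[k] k) (g h : H) : H := convMap k H I (g ⊗ₜ h)

/-- The linear map `g ⊗ h ↦ ∫(h S(g₁)) g₂`. -/
def convMap' (I : H →ₗ[k] k) : H ⊗[k] H →ₗ[k] H :=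
  (TensorProduct.lid k H).toLinearMap
    ∘ₗ (intPair k H I).rTensor H
    ∘ₗ (TensorProduct.assoc k H H H).symm.toLinearMap
    ∘ₗ LinearMap.lTensor H (Coalgebra.comul (R := k))
    ∘ₗ (TensorProduct.comm k H H).toLinearMap

namespace HopfAux

open Coalgebra

section Conv

variable {R : Type*} [CommSemiring R] {C : Type*} [AddCommMonoid C] [Module R C] [Coalgebra R C]
  {A : Type*} [Semiring A] [Algebra R A]

/-- Convolution product on linear maps from a coalgebra to an algebra. -/
def conv (f g : C →ₗ[R] A) : C →ₗ[R] A :=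
  LinearMap.mul' R A ∘ₗ TensorProduct.map f g ∘ₗ Coalgebra.comul

lemma conv_repr (f g : C →ₗ[R] A) {a : C} {ι : Type*} (r : Coalgebra.Repr R a ι) :
    conv f g a = ∑ i ∈ r.index, f (r.left i) * g (r.right i) := by
  simp [conv, ← r.eq, map_sum]

/-- Unit for convolution. -/
def cunit : C →ₗ[R] A := Algebra.linearMap R A ∘ₗ Coalgebra.counit

lemma cunit_apply (a : C) :
    (cunit (R := R) (C := C) (A := A)) a = algebraMap R A (Coalgebra.counit (R := R) a) := rfl

lemma sum_counit_smul {a : C} {ι : Type*} (r : Coalgebra.Repr R a ι) :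
    ∑ i ∈ r.index, Coalgebra.counit (R := R) (r.left i) • r.right i = a := by
  have := congrArg (TensorProduct.lid R C) (Coalgebra.sum_counit_tmul_eq r)
  simp only [map_sum, TensorProduct.lid_tmul] at this
  simpa using this

lemma sum_smul_counit {a : C} {ι : Type*} (r : Coalgebra.Repr R a ι) :
    ∑ i ∈ r.index, Coalgebra.counit (R := R) (r.right i) • r.left i = a := by
  have := congrArg (TensorProduct.rid R C) (Coalgebra.sum_tmul_counit_eq r)
  simp only [map_sum, TensorProduct.rid_tmul] at this
  simpa using this

lemma cunit_conv (f : C →ₗ[R] A) : conv cunit f = f := by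
  ext a
  rw [conv_repr _ _ (ℛ R a)]
  simp only [cunit_apply, Algebra.algebraMap_eq_smul_one, smul_mul_assoc, one_mul, ← map_smul]
  rw [← map_sum, sum_counit_smul]

lemma conv_cunit (f : C →ₗ[R] A) : conv f cunit = f := by
  ext a
  rw [conv_repr _ _ (ℛ R a)]
  simp only [cunit_apply, Algebra.algebraMap_eq_smul_one, mul_smul_comm, mul_one, ← map_smul]
  rw [← map_sum, sum_smul_counit]

lemma conv_assoc (f g h : C →ₗ[R] A) : conv (conv f g) h = conv f (conv g h) := by
  ext a
  set r := ℛ R a with hr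
  set t : ∀ i : r.ι, Coalgebra.Repr R (r.left i) (C × C) := fun i => ℛ R (r.left i) with ht
  set s : ∀ i : r.ι, Coalgebra.Repr R (r.right i) (C × C) := fun i => ℛ R (r.right i) with hs
  have key := congrArg (LinearMap.mul' R A ∘ₗ
    TensorProduct.map f (LinearMap.mul' R A ∘ₗ TensorProduct.map g h))
    (Coalgebra.sum_tmul_tmul_eq r t s)
  simp only [map_sum, LinearMap.comp_apply, TensorProduct.map_tmul, LinearMap.mul'_apply] at key
  rw [conv_repr (conv f g) h r, conv_repr f (conv g h) r]
  calc ∑ i ∈ r.index, conv f g (r.left i) * h (r.right i)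
      = ∑ i ∈ r.index, ∑ j ∈ (t i).index,
          f ((t i).left j) * ((g ((t i).right j)) * h (r.right i)) := by
        refine Finset.sum_congr rfl fun i _ => ?_
        rw [conv_repr f g (t i), Finset.sum_mul]
        exact Finset.sum_congr rfl fun j _ => (mul_assoc _ _ _)
    _ = ∑ i ∈ r.index, ∑ j ∈ (s i).index,
          f (r.left i) * (g ((s i).left j) * h ((s i).right j)) := key
    _ = ∑ i ∈ r.index, f (r.left i) * conv g h (r.right i) := by
        refine Finset.sum_congr rfl fun i _ => ?_
        rw [conv_repr g h (s i), Finset.mul_sum]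

lemma conv_inv_unique (f g h : C →ₗ[R] A) (h1 : conv f g = cunit) (h2 : conv g h = cunit) :
    f = h := by
  have := conv_assoc f g h
  rw [h1, h2, cunit_conv, conv_cunit] at this
  exact this.symm

end Conv

section Antipode

variable {K : Type*} [CommSemiring K] {B : Type*} [Semiring B] [HopfAlgebra K B]

open HopfAlgebra

/-- `y ↦ 1 ⊗ S y`. -/
def jmap : B →ₗ[K] B ⊗[K] B := TensorProduct.mk K B B 1 ∘ₗ antipode (R := K)

/-- `z ↦ S z ⊗ 1`. -/
def emap : B →ₗ[K] B ⊗[K] B := (TensorProduct.mk K B B).flip 1 ∘ₗ antipode (R := K)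

/-- `x ⊗ y ↦ Δ(x) * (1 ⊗ S y)`. -/
def Kmap : B ⊗[K] B →ₗ[K] B ⊗[K] B :=
  LinearMap.mul' K (B ⊗[K] B) ∘ₗ TensorProduct.map (Coalgebra.comul) jmap

lemma Kmap_tmul (x y : B) :
    Kmap (x ⊗ₜ[K] y) = Coalgebra.comul x * ((1 : B) ⊗ₜ[K] antipode (R := K) y) := by
  simp [Kmap, jmap]

lemma Kmap_comul (x : B) : Kmap (K := K) (Coalgebra.comul x) = x ⊗ₜ[K] 1 := by
  set r := ℛ K x with hr
  set t : ∀ i : r.ι, Coalgebra.Repr K (r.left i) (B × B) := fun i => ℛ K (r.left i) with ht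
  set s : ∀ i : r.ι, Coalgebra.Repr K (r.right i) (B × B) := fun i => ℛ K (r.right i) with hs
  have key := congrArg (LinearMap.lTensor B
      (LinearMap.mul' K B ∘ₗ LinearMap.lTensor B (antipode (R := K))))
    (Coalgebra.sum_tmul_tmul_eq r t s)
  simp only [map_sum, LinearMap.lTensor_tmul, LinearMap.comp_apply,
    LinearMap.mul'_apply] at key
  calc Kmap (K := K) (Coalgebra.comul x)
      = ∑ i ∈ r.index,
          Coalgebra.comul (r.left i) * ((1:B) ⊗ₜ[K] antipode (R := K) (r.right i)) := by
        rw [← r.eq, map_sum]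
        exact Finset.sum_congr rfl fun i _ => Kmap_tmul _ _
    _ = ∑ i ∈ r.index, ∑ j ∈ (t i).index,
          (t i).left j ⊗ₜ[K] ((t i).right j * antipode (R := K) (r.right i)) := by
        refine Finset.sum_congr rfl fun i _ => ?_
        rw [← (t i).eq, Finset.sum_mul]
        exact Finset.sum_congr rfl fun j _ => by
          simp [Algebra.TensorProduct.tmul_mul_tmul]
    _ = ∑ i ∈ r.index, ∑ j ∈ (s i).index,
          r.left i ⊗ₜ[K] ((s i).left j * antipode (R := K) ((s i).right j)) := key
    _ = ∑ i ∈ r.index, r.left i ⊗ₜ[K] (Coalgebra.counit (R := K) (r.right i) • (1:B)) := by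
        refine Finset.sum_congr rfl fun i _ => ?_
        rw [← TensorProduct.tmul_sum, sum_mul_antipode_eq_smul (s i)]
    _ = (∑ i ∈ r.index, Coalgebra.counit (R := K) (r.right i) • r.left i) ⊗ₜ[K] (1:B) := by
        rw [TensorProduct.sum_tmul]
        exact Finset.sum_congr rfl fun i _ => by
          rw [TensorProduct.tmul_smul, TensorProduct.smul_tmul']
    _ = x ⊗ₜ[K] 1 := by rw [sum_smul_counit r]

/-- `a ↦ S(a₂) ⊗ S(a₁)`. -/
def wmap : B →ₗ[K] B ⊗[K] B :=
  (TensorProduct.comm K B B).toLinearMap ∘ₗ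
    TensorProduct.map (antipode (R := K)) (antipode (R := K)) ∘ₗ Coalgebra.comul

lemma claim1 :
    conv (Coalgebra.comul ∘ₗ antipode (R := K) (A := B)) Coalgebra.comul = cunit := by
  ext a
  rw [conv_repr _ _ (ℛ K a)]
  calc ∑ i ∈ (ℛ K a).index,
        (Coalgebra.comul ∘ₗ antipode (R := K) (A := B)) ((ℛ K a).left i)
          * Coalgebra.comul ((ℛ K a).right i)
      = Coalgebra.comul (R := K)
          (∑ i ∈ (ℛ K a).index, antipode (R := K) ((ℛ K a).left i) * (ℛ K a).right i) := by
        rw [map_sum]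
        exact Finset.sum_congr rfl fun i _ => (Bialgebra.comul_mul _ _).symm
    _ = cunit a := by
        rw [sum_antipode_mul_eq_smul (ℛ K a), map_smul, Bialgebra.comul_one]
        simp [cunit, Algebra.algebraMap_eq_smul_one]

lemma claim2 : conv (Coalgebra.comul (R := K) (A := B)) wmap = cunit := by
  ext a
  set r := ℛ K a with hr
  set t : ∀ i : r.ι, Coalgebra.Repr K (r.left i) (B × B) := fun i => ℛ K (r.left i) with ht
  set s : ∀ i : r.ι, Coalgebra.Repr K (r.right i) (B × B) := fun i => ℛ K (r.right i) with hs
  have key := congrArg (LinearMap.mul' K (B ⊗[K] B) ∘ₗ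
      TensorProduct.map Kmap emap ∘ₗ (TensorProduct.assoc K B B B).symm.toLinearMap)
    (Coalgebra.sum_tmul_tmul_eq r t s)
  simp only [map_sum, LinearMap.comp_apply, LinearEquiv.coe_coe,
    TensorProduct.assoc_symm_tmul, TensorProduct.map_tmul, LinearMap.mul'_apply] at key
  rw [conv_repr _ _ r]
  calc ∑ i ∈ r.index, Coalgebra.comul (r.left i) * wmap (r.right i)
      = ∑ i ∈ r.index, ∑ j ∈ (s i).index,
          Kmap (r.left i ⊗ₜ[K] (s i).left j) * emap ((s i).right j) := by
        refine Finset.sum_congr rfl fun i _ => ?_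
        rw [wmap, LinearMap.comp_apply, LinearMap.comp_apply, ← (s i).eq, map_sum, map_sum,
          Finset.mul_sum]
        refine Finset.sum_congr rfl fun j _ => ?_
        simp only [TensorProduct.map_tmul, LinearEquiv.coe_coe, TensorProduct.comm_tmul,
          Kmap_tmul, emap, LinearMap.comp_apply, LinearMap.flip_apply, TensorProduct.mk_apply,
          mul_assoc, Algebra.TensorProduct.tmul_mul_tmul, one_mul, mul_one]
    _ = ∑ i ∈ r.index, ∑ j ∈ (t i).index,
          Kmap ((t i).left j ⊗ₜ[K] (t i).right j) * emap (r.right i) := key.symm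
    _ = ∑ i ∈ r.index, (r.left i * antipode (R := K) (r.right i)) ⊗ₜ[K] (1:B) := by
        refine Finset.sum_congr rfl fun i _ => ?_
        rw [← Finset.sum_mul, ← map_sum, (t i).eq, Kmap_comul]
        simp [emap, Algebra.TensorProduct.tmul_mul_tmul]
    _ = cunit a := by
        rw [← TensorProduct.sum_tmul, sum_mul_antipode_eq_smul r]
        simp [cunit, Algebra.algebraMap_eq_smul_one, TensorProduct.smul_tmul',
          Algebra.TensorProduct.one_def]

set_option maxHeartbeats 1000000 in
lemma antipode_comul_eq :
    Coalgebra.comul ∘ₗ antipode (R := K) (A := B) = wmap :=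
  conv_inv_unique (R := K) (C := B) (A := B ⊗[K] B)
    (Coalgebra.comul ∘ₗ antipode (R := K) (A := B)) Coalgebra.comul wmap claim1 claim2

/-- The antipode is an anti-coalgebra morphism, elementwise with a chosen representation. -/
lemma comul_antipode_repr {x : B} {ι : Type*} (r : Coalgebra.Repr K x ι) :
    Coalgebra.comul (antipode (R := K) x) =
      ∑ i ∈ r.index, antipode (R := K) (r.right i) ⊗ₜ[K] antipode (R := K) (r.left i) := by
  have := LinearMap.congr_fun (antipode_comul_eq (K := K) (B := B)) x
  rw [LinearMap.comp_apply] at this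
  rw [this, wmap, LinearMap.comp_apply, LinearMap.comp_apply, ← r.eq, map_sum, map_sum]
  simp

end Antipode

section Main

open Coalgebra HopfAlgebra

lemma intPair_tmul (I : H →ₗ[k] k) (x y : H) :
    intPair k H I (x ⊗ₜ[k] y) = I (x * antipode (R := k) y) := by
  simp [intPair]

set_option synthInstance.maxHeartbeats 400000 in
lemma convMap_tmul (I : H →ₗ[k] k) (g h : H) {ι : Type*} (rh : Coalgebra.Repr k h ι) :
    convMap k H I (g ⊗ₜ[k] h) =
      ∑ i ∈ rh.index, I (rh.right i * antipode (R := k) g) • rh.left i := by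
  rw [convMap]
  simp only [LinearMap.comp_apply, LinearEquiv.coe_coe, TensorProduct.comm_tmul]
  rw [LinearMap.rTensor_tmul, ← rh.eq, TensorProduct.sum_tmul, map_sum, map_sum, map_sum]
  refine Finset.sum_congr rfl fun i _ => ?_
  simp [intPair_tmul]

set_option synthInstance.maxHeartbeats 400000 in
lemma convMap'_tmul (I : H →ₗ[k] k) (g h : H) {ι : Type*} (rg : Coalgebra.Repr k g ι) :
    convMap' k H I (g ⊗ₜ[k] h) =
      ∑ j ∈ rg.index, I (h * antipode (R := k) (rg.left j)) • rg.right j := by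
  rw [convMap']
  simp only [LinearMap.comp_apply, LinearEquiv.coe_coe, TensorProduct.comm_tmul]
  rw [LinearMap.lTensor_tmul, ← rg.eq, TensorProduct.tmul_sum, map_sum, map_sum, map_sum]
  refine Finset.sum_congr rfl fun j _ => ?_
  simp [intPair_tmul]

end Main

end HopfAux

/-- For a Hopf algebra `H` with nonzero left integral `∫`, the identity
`h₁ ∫(h₂ S(g)) = ∫(h S(g₁)) g₂` holds for all `g, h ∈ H`. -/
theorem left_integral_identity (I : H →ₗ[k] k) (hI : IsLeftIntegral k H I) (hne : I ≠ 0) :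
    ∀ g h : H, convMap k H I (g ⊗ₜ[k] h) = convMap' k H I (g ⊗ₜ[k] h) := by
  classical
  intro g h
  set S : H →ₗ[k] H := HopfAlgebra.antipode (R := k) with hS
  set rg := Coalgebra.Repr.arbitrary k g with hrg
  set rh := Coalgebra.Repr.arbitrary k h with hrh
  set t : ∀ j : rg.ι, Coalgebra.Repr k (rg.left j) (H × H) := fun j => Coalgebra.Repr.arbitrary k (rg.left j) with htd
  set s : ∀ j : rg.ι, Coalgebra.Repr k (rg.right j) (H × H) := fun j => Coalgebra.Repr.arbitrary k (rg.right j) with hsd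
  rw [HopfAux.convMap_tmul k H I g h rh, HopfAux.convMap'_tmul k H I g h rg]
  -- Step 1: apply the left integral property to `h * S (g₁)`.
  have step1 : ∀ j ∈ rg.index, I (h * S (rg.left j)) • (1 : H) =
      ∑ i ∈ rh.index, ∑ m ∈ (t j).index,
        I (rh.right i * S ((t j).left m)) • (rh.left i * S ((t j).right m)) := by
    intro j _
    have hc : Coalgebra.comul (R := k) (h * S (rg.left j)) =
        ∑ i ∈ rh.index, ∑ m ∈ (t j).index,
          (rh.left i * S ((t j).right m)) ⊗ₜ[k] (rh.right i * S ((t j).left m)) := by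
      rw [Bialgebra.comul_mul, HopfAux.comul_antipode_repr (t j), ← rh.eq,
        Finset.sum_mul_sum]
      exact Finset.sum_congr rfl fun i _ => Finset.sum_congr rfl fun m _ => by
        rw [Algebra.TensorProduct.tmul_mul_tmul]
    have h2 := hI (h * S (rg.left j))
    rw [hc, map_sum, map_sum] at h2
    set_option synthInstance.maxHeartbeats 400000 in
    simp only [map_sum, LinearMap.lTensor_tmul, TensorProduct.rid_tmul] at h2
    exact h2.symm
  -- Step 2: the trilinear map used to exploit coassociativity of `comul g`.
  set T : H ⊗[k] (H ⊗[k] H) →ₗ[k] H := ∑ i ∈ rh.index,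
    (TensorProduct.lid k H).toLinearMap ∘ₗ
      TensorProduct.map (I ∘ₗ LinearMap.mulLeft k (rh.right i) ∘ₗ S)
        (LinearMap.mulLeft k (rh.left i) ∘ₗ LinearMap.mul' k H ∘ₗ LinearMap.rTensor H S)
    with hT
  have hTt : ∀ x y z : H, T (x ⊗ₜ[k] (y ⊗ₜ[k] z)) =
      ∑ i ∈ rh.index, I (rh.right i * S x) • (rh.left i * (S y * z)) := by
    intro x y z
    rw [hT]
    simp [LinearMap.sum_apply]
  have key := congrArg T (Coalgebra.sum_tmul_tmul_eq rg t s)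
  simp only [map_sum, hTt] at key
  symm
  calc ∑ j ∈ rg.index, I (h * S (rg.left j)) • rg.right j
      = ∑ j ∈ rg.index, (I (h * S (rg.left j)) • (1 : H)) * rg.right j := by
        refine Finset.sum_congr rfl fun j _ => ?_
        rw [smul_mul_assoc, one_mul]
    _ = ∑ j ∈ rg.index, ∑ i ∈ rh.index, ∑ m ∈ (t j).index,
          I (rh.right i * S ((t j).left m)) • (rh.left i * (S ((t j).right m) * rg.right j)) := by
        refine Finset.sum_congr rfl fun j hj => ?_
        rw [step1 j hj, Finset.sum_mul]
        refine Finset.sum_congr rfl fun i _ => ?_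
        rw [Finset.sum_mul]
        exact Finset.sum_congr rfl fun m _ => by
          rw [smul_mul_assoc, mul_assoc]
    _ = ∑ j ∈ rg.index, ∑ m ∈ (t j).index, ∑ i ∈ rh.index,
          I (rh.right i * S ((t j).left m)) • (rh.left i * (S ((t j).right m) * rg.right j)) := by
        exact Finset.sum_congr rfl fun j _ => Finset.sum_comm
    _ = ∑ j ∈ rg.index, ∑ m ∈ (s j).index, ∑ i ∈ rh.index,
          I (rh.right i * S (rg.left j)) • (rh.left i * (S ((s j).left m) * (s j).right m)) :=
        key
    _ = ∑ j ∈ rg.index, ∑ i ∈ rh.index,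
          (I (rh.right i * S (rg.left j)) * Coalgebra.counit (R := k) (rg.right j)) •
            rh.left i := by
        refine Finset.sum_congr rfl fun j _ => ?_
        rw [Finset.sum_comm]
        refine Finset.sum_congr rfl fun i _ => ?_
        rw [← Finset.smul_sum, ← Finset.mul_sum, HopfAlgebra.sum_antipode_mul_eq_smul (s j)]
        rw [mul_smul_comm, mul_one, smul_smul, mul_comm]
    _ = ∑ i ∈ rh.index, I (rh.right i * S g) • rh.left i := by
        rw [Finset.sum_comm]
        refine Finset.sum_congr rfl fun i _ => ?_
        rw [← Finset.sum_smul]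
        congr 1
        have := congrArg (I ∘ₗ LinearMap.mulLeft k (rh.right i) ∘ₗ S)
          (HopfAux.sum_smul_counit rg)
        simp only [map_sum, map_smul, LinearMap.comp_apply, LinearMap.mulLeft_apply,
          smul_eq_mul] at this
        rw [← this]
        exact Finset.sum_congr rfl fun j _ => mul_comm _ _

end
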